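/- arXiv:1002.4789 — 7 statements merged into one kernel-verified Lean document; each statement's English description precedes it below -/
import Mathlib

section
/- Let r_L, r_R be positive integers and let T be any subspace of ℝ^{r_R r_L}. Then there exist subspaces S_R° ⊆ ℝ^{r_R} and S_L° ⊆ ℝ^{r_L} such that (1) T ⊆ S_R° ⊗ S_L°, and (2) for any subspaces S_R ⊆ ℝ^{r_R} and S_L ⊆ ℝ^{r_L} with T ⊆ S_R ⊗ S_L, one has S_R° ⊗ S_L° ⊆ S_R ⊗ S_L. In other words, the family of Kronecker-product subspaces containing T has a least element (the Kronecker envelope of T), which is therefore unique. -/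
open Matrix MeasureTheory ProbabilityTheory

/-- Column-stacking vectorization of a matrix: for `A : Matrix (Fin m) (Fin n) ℝ`,
`vecF A` is the vector in `ℝ^{nm}` with `vecF A (i + m*j) = A i j`
(the columns of `A` stacked on top of each other). -/
def vecF {m n : ℕ} (A : Matrix (Fin m) (Fin n) ℝ) : Fin (n * m) → ℝ :=
  fun x => A (finProdFinEquiv.symm x).2 (finProdFinEquiv.symm x).1

/-- Kronecker product of matrices with flat `Fin` indices:
`(A ⊗ B)_{(i-1)p+k, (j-1)q+l} = A i j * B k l`. -/
def kronF {m n p q : ℕ} (A : Matrix (Fin m) (Fin n) ℝ) (B : Matrix (Fin p) (Fin q) ℝ) :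
    Matrix (Fin (m * p)) (Fin (n * q)) ℝ :=
  Matrix.of fun i j =>
    A (finProdFinEquiv.symm i).1 (finProdFinEquiv.symm j).1 *
      B (finProdFinEquiv.symm i).2 (finProdFinEquiv.symm j).2

/-- Kronecker product of vectors: `(v ⊗ w)_{(i-1)n+j} = v i * w j`. -/
def vkronF {m n : ℕ} (v : Fin m → ℝ) (w : Fin n → ℝ) : Fin (m * n) → ℝ :=
  fun x => v (finProdFinEquiv.symm x).1 * w (finProdFinEquiv.symm x).2

/-- The Kronecker product of two subspaces `S ⊆ ℝ^m` and `T ⊆ ℝ^n`: the span in `ℝ^{mn}` of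
all Kronecker products `v ⊗ w` with `v ∈ S`, `w ∈ T`. -/
def skron {m n : ℕ} (S : Submodule ℝ (Fin m → ℝ)) (T : Submodule ℝ (Fin n → ℝ)) :
    Submodule ℝ (Fin (m * n) → ℝ) :=
  Submodule.span ℝ {x | ∃ v ∈ S, ∃ w ∈ T, x = vkronF v w}

/-- The `j`-th column slice of a flat vector, as a linear map. -/
def colL {m n : ℕ} (j : Fin n) : (Fin (m * n) → ℝ) →ₗ[ℝ] (Fin m → ℝ) where
  toFun x := fun i => x (finProdFinEquiv (i, j))
  map_add' _ _ := rfl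
  map_smul' _ _ := rfl

/-- The `i`-th row slice of a flat vector, as a linear map. -/
def rowL {m n : ℕ} (i : Fin m) : (Fin (m * n) → ℝ) →ₗ[ℝ] (Fin n → ℝ) where
  toFun x := fun j => x (finProdFinEquiv (i, j))
  map_add' _ _ := rfl
  map_smul' _ _ := rfl

lemma colL_vkronF {m n : ℕ} (v : Fin m → ℝ) (w : Fin n → ℝ) (j : Fin n) :
    colL j (vkronF v w) = w j • v := by
  funext i
  simp [colL, vkronF, Pi.smul_apply, mul_comm]

lemma rowL_vkronF {m n : ℕ} (v : Fin m → ℝ) (w : Fin n → ℝ) (i : Fin m) :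
    rowL i (vkronF v w) = v i • w := by
  funext j
  simp [rowL, vkronF, Pi.smul_apply]

lemma colL_mem_of_mem_skron {m n : ℕ} {S : Submodule ℝ (Fin m → ℝ)}
    {W : Submodule ℝ (Fin n → ℝ)} {x : Fin (m * n) → ℝ} (hx : x ∈ skron S W) (j : Fin n) :
    colL j x ∈ S := by
  have h : skron S W ≤ S.comap (colL (m := m) j) := by
    apply Submodule.span_le.2
    rintro _ ⟨v, hv, w, hw, rfl⟩
    simp only [SetLike.mem_coe, Submodule.mem_comap, colL_vkronF]
    exact S.smul_mem _ hv
  exact h hx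

lemma rowL_mem_of_mem_skron {m n : ℕ} {S : Submodule ℝ (Fin m → ℝ)}
    {W : Submodule ℝ (Fin n → ℝ)} {x : Fin (m * n) → ℝ} (hx : x ∈ skron S W) (i : Fin m) :
    rowL i x ∈ W := by
  have h : skron S W ≤ W.comap (rowL (n := n) i) := by
    apply Submodule.span_le.2
    rintro _ ⟨v, hv, w, hw, rfl⟩
    simp only [SetLike.mem_coe, Submodule.mem_comap, rowL_vkronF]
    exact W.smul_mem _ hw
  exact h hx

/-- The key factorization lemma: if all column slices of `x` lie in `S` and all row slices lie
in `W`, then `x ∈ skron S W`. -/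
lemma mem_skron_of_cols_rows {m n : ℕ} (x : Fin (m * n) → ℝ)
    (S : Submodule ℝ (Fin m → ℝ)) (W : Submodule ℝ (Fin n → ℝ))
    (hc : ∀ j : Fin n, colL (m := m) j x ∈ S)
    (hr : ∀ i : Fin m, rowL (n := n) i x ∈ W) :
    x ∈ skron S W := by
  classical
  set col : Fin n → (Fin m → ℝ) := fun j => colL (m := m) j x with hcol
  set C : Submodule ℝ (Fin m → ℝ) := Submodule.span ℝ (Set.range col) with hC
  have hCS : C ≤ S := Submodule.span_le.2 (by rintro _ ⟨j, rfl⟩; exact hc j)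
  have hmemC : ∀ j, col j ∈ C := fun j => Submodule.subset_span ⟨j, rfl⟩
  let b := Module.finBasis ℝ C
  obtain ⟨C', hC'⟩ := Submodule.exists_isCompl C
  let π := Submodule.linearProjOfIsCompl C C' hC'
  have hπ : ∀ j, π (col j) = ⟨col j, hmemC j⟩ := fun j =>
    Submodule.linearProjOfIsCompl_apply_left hC' ⟨col j, hmemC j⟩
  set w : Fin (Module.finrank ℝ C) → (Fin n → ℝ) :=
    fun a j => b.repr (π (col j)) a with hwdef
  -- each w a is in W
  have hw : ∀ a, w a ∈ W := by
    intro a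
    set φ : (Fin m → ℝ) →ₗ[ℝ] ℝ := (b.coord a).comp π with hφ
    have hwa : w a = ∑ i : Fin m, φ (fun k => if i = k then 1 else 0) • rowL (n := n) i x := by
      funext j
      have := LinearMap.pi_apply_eq_sum_univ φ (col j)
      simp only [Finset.sum_apply, Pi.smul_apply, smul_eq_mul]
      calc w a j = φ (col j) := rfl
        _ = ∑ i : Fin m, (col j) i • φ (fun k => if i = k then 1 else 0) := this
        _ = ∑ i : Fin m, φ (fun k => if i = k then 1 else 0) * rowL (n := n) i x j := by
            apply Finset.sum_congr rfl
            intro i _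
            rw [smul_eq_mul, mul_comm]
            rfl
    rw [hwa]
    exact Submodule.sum_mem W fun i _ => W.smul_mem _ (hr i)
  -- x is the sum of kronecker products
  have hx : x = ∑ a, vkronF (↑(b a)) (w a) := by
    funext z
    obtain ⟨⟨i, j⟩, hz⟩ : ∃ p, finProdFinEquiv p = z := ⟨finProdFinEquiv.symm z, Equiv.apply_symm_apply _ z⟩
    subst hz
    have hrepr := congrArg (fun v : Fin m → ℝ => v i)
      (congrArg (Subtype.val) (b.sum_repr ⟨col j, hmemC j⟩))
    simp only [Submodule.coe_sum, Finset.sum_apply, SetLike.val_smul, Pi.smul_apply,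
      smul_eq_mul] at hrepr
    have hxz : x (finProdFinEquiv (i, j)) = col j i := rfl
    rw [hxz, ← hrepr]
    simp only [Finset.sum_apply, vkronF, Equiv.symm_apply_apply]
    apply Finset.sum_congr rfl
    intro a _
    rw [hwdef]
    simp only [hπ j]
    ring
  rw [hx]
  exact Submodule.sum_mem _ fun a _ =>
    Submodule.subset_span ⟨↑(b a), hCS (b a).2, w a, hw a, rfl⟩

/-- Existence and uniqueness of the Kronecker envelope of a subspace `T ⊆ ℝ^{r_R r_L}`:
the family of Kronecker-product subspaces containing `T` has a least element. -/
theorem kronecker_envelope_exists (rL rR : ℕ) (hL : 0 < rL) (hR : 0 < rR)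
    (T : Submodule ℝ (Fin (rR * rL) → ℝ)) :
    ∃ (SR : Submodule ℝ (Fin rR → ℝ)) (SL : Submodule ℝ (Fin rL → ℝ)),
      T ≤ skron SR SL ∧
        ∀ (SR' : Submodule ℝ (Fin rR → ℝ)) (SL' : Submodule ℝ (Fin rL → ℝ)),
          T ≤ skron SR' SL' → skron SR SL ≤ skron SR' SL' := by
  refine ⟨Submodule.span ℝ {v | ∃ t ∈ T, ∃ j, v = colL (m := rR) j t},
    Submodule.span ℝ {w | ∃ t ∈ T, ∃ i, w = rowL (n := rL) i t}, ?_, ?_⟩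
  · intro t ht
    apply mem_skron_of_cols_rows
    · intro j
      exact Submodule.subset_span ⟨t, ht, j, rfl⟩
    · intro i
      exact Submodule.subset_span ⟨t, ht, i, rfl⟩
  · intro SR' SL' hT
    have hR' : Submodule.span ℝ {v | ∃ t ∈ T, ∃ j, v = colL (m := rR) j t} ≤ SR' :=
      Submodule.span_le.2 (by rintro _ ⟨t, ht, j, rfl⟩; exact colL_mem_of_mem_skron (hT ht) j)
    have hL' : Submodule.span ℝ {w | ∃ t ∈ T, ∃ i, w = rowL (n := rL) i t} ≤ SL' :=
      Submodule.span_le.2 (by rintro _ ⟨t, ht, i, rfl⟩; exact rowL_mem_of_mem_skron (hT ht) i)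
    apply Submodule.span_le.2
    rintro _ ⟨v, hv, w, hw, rfl⟩
    exact Submodule.subset_span ⟨v, hR' hv, w, hL' hw, rfl⟩
end

section
/- Let (Ω, 𝓕, P) be a probability space, let r_L, r_R, k be positive integers, and let U : Ω → ℝ^{(r_R r_L) × k} be a measurable random matrix whose entries have finite variance. Then there exist subspaces S₁ ⊆ ℝ^{r_R} and S₂ ⊆ ℝ^{r_L} such that (1) span(U(ω)) ⊆ S₁ ⊗ S₂ for P-almost every ω, and (2) whenever subspaces S₁' ⊆ ℝ^{r_R} and S₂' ⊆ ℝ^{r_L} satisfy span(U(ω)) ⊆ S₁' ⊗ S₂' for P-almost every ω, one has S₁ ⊗ S₂ ⊆ S₁' ⊗ S₂'. -/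
open Matrix MeasureTheory ProbabilityTheory

/-- The column space of a matrix: the span of its columns. -/
def colSpan {N k : ℕ} (U : Matrix (Fin N) (Fin k) ℝ) : Submodule ℝ (Fin N → ℝ) :=
  Submodule.span ℝ (Set.range fun j => fun i => U i j)

/-- Real matrices carry the Borel (product) σ-algebra. -/
noncomputable instance {m n : ℕ} : MeasurableSpace (Matrix (Fin m) (Fin n) ℝ) :=
  (inferInstance : MeasurableSpace (Fin m → Fin n → ℝ))

/-!
Among the subspaces containing `span(U ω)` almost surely there is a least one, `V₀`: the family
is closed under finite intersections and subspaces of `ℝ^{mn}` satisfy the descending chain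
condition. Reshaping `x ∈ ℝ^{mn}` into an `m × n` matrix, `x ∈ S ⊗ T` holds exactly when all
columns of the reshaped matrix lie in `S` and all rows in `T`. Hence `V₀ ≤ S ⊗ T` iff `S` contains
all columns and `T` all rows of the elements of `V₀`, and the envelope is `S₁ ⊗ S₂` with `S₁` the
span of those columns and `S₂` the span of those rows.
-/

theorem exists_least_eventually_ge {α Ω : Type*} [SemilatticeInf α] [OrderTop α]
    [WellFoundedLT α] (l : Filter Ω) (f : Ω → α) :
    ∃ a, (∀ᶠ ω in l, f ω ≤ a) ∧ ∀ b, (∀ᶠ ω in l, f ω ≤ b) → a ≤ b := by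
  obtain ⟨a, ha, hmin⟩ := wellFounded_lt.has_min {b | ∀ᶠ ω in l, f ω ≤ b}
    ⟨⊤, .of_forall fun _ => le_top⟩
  refine ⟨a, ha, fun b hb => ?_⟩
  have hab : ∀ᶠ ω in l, f ω ≤ a ⊓ b := (ha.and hb).mono fun _ h => le_inf h.1 h.2
  exact inf_eq_left.mp ((inf_le_left.lt_or_eq).resolve_left (hmin _ hab))

section Reshape

variable {m n : ℕ}

/- `x ∈ ℝ^{mn}` is read as the `m × n` matrix `(x (i, j))`, which turns `v ⊗ w` into `v wᵀ`. -/

def reshapeCol (m n : ℕ) (j : Fin n) : (Fin (m * n) → ℝ) →ₗ[ℝ] (Fin m → ℝ) where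
  toFun x := fun i => x (finProdFinEquiv (i, j))
  map_add' _ _ := rfl
  map_smul' _ _ := rfl

def reshapeRow (m n : ℕ) (i : Fin m) : (Fin (m * n) → ℝ) →ₗ[ℝ] (Fin n → ℝ) where
  toFun x := fun j => x (finProdFinEquiv (i, j))
  map_add' _ _ := rfl
  map_smul' _ _ := rfl

theorem reshapeCol_vkronF (j : Fin n) (v : Fin m → ℝ) (w : Fin n → ℝ) :
    reshapeCol m n j (vkronF v w) = w j • v := by
  ext i
  simp [reshapeCol, vkronF, mul_comm]

theorem reshapeRow_vkronF (i : Fin m) (v : Fin m → ℝ) (w : Fin n → ℝ) :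
    reshapeRow m n i (vkronF v w) = v i • w := by
  ext j
  simp [reshapeRow, vkronF]

variable {S S' : Submodule ℝ (Fin m → ℝ)} {T T' : Submodule ℝ (Fin n → ℝ)} {x : Fin (m * n) → ℝ}

theorem skron_mono (hS : S ≤ S') (hT : T ≤ T') : skron S T ≤ skron S' T' :=
  Submodule.span_mono fun _ ⟨v, hv, w, hw, hx⟩ => ⟨v, hS hv, w, hT hw, hx⟩

theorem skron_le_comap_reshape :
    skron S T ≤ (⨅ j, S.comap (reshapeCol m n j)) ⊓ ⨅ i, T.comap (reshapeRow m n i) := by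
  refine Submodule.span_le.mpr ?_
  rintro _ ⟨v, hv, w, hw, rfl⟩
  simp only [SetLike.mem_coe, Submodule.mem_inf, Submodule.mem_iInf, Submodule.mem_comap,
    reshapeCol_vkronF, reshapeRow_vkronF]
  exact ⟨fun j => S.smul_mem _ hv, fun i => T.smul_mem _ hw⟩

/-- `x = ∑ⱼ colⱼ(x) ⊗ π eⱼ` for a projection `π` onto `T`, since `π` fixes every row of `x`. -/
theorem mem_skron_of_forall_reshape (hcol : ∀ j, reshapeCol m n j x ∈ S)
    (hrow : ∀ i, reshapeRow m n i x ∈ T) : x ∈ skron S T := by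
  obtain ⟨q, hq⟩ := Submodule.exists_isCompl T
  let π : (Fin n → ℝ) →ₗ[ℝ] (Fin n → ℝ) := T.subtype ∘ₗ T.projectionOnto q hq
  have hπ_mem (w) : π w ∈ T := (T.projectionOnto q hq w).2
  have hπ_fix (w) (hw : w ∈ T) : π w = w :=
    congrArg Subtype.val (Submodule.projectionOnto_apply_left hq ⟨w, hw⟩)
  have hrow_sum (i) : reshapeRow m n i x = ∑ j, x (finProdFinEquiv (i, j)) • Pi.single j 1 := by
    ext j
    simp [reshapeRow, Pi.single_apply]
  have hx : x = ∑ j, vkronF (reshapeCol m n j x) (π (Pi.single j 1)) := by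
    ext y
    obtain ⟨⟨i, j⟩, rfl⟩ := finProdFinEquiv.surjective y
    have hxy : x (finProdFinEquiv (i, j)) = π (reshapeRow m n i x) j := by
      rw [hπ_fix _ (hrow i)]
      rfl
    rw [hxy, hrow_sum, map_sum]
    simp [vkronF, reshapeCol]
  rw [hx]
  exact Submodule.sum_mem _ fun j _ => Submodule.subset_span ⟨_, hcol j, _, hπ_mem _, rfl⟩

theorem mem_skron_iff :
    x ∈ skron S T ↔ (∀ j, reshapeCol m n j x ∈ S) ∧ ∀ i, reshapeRow m n i x ∈ T := by
  refine ⟨fun hx => ?_, fun h => mem_skron_of_forall_reshape h.1 h.2⟩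
  simpa only [Submodule.mem_inf, Submodule.mem_iInf, Submodule.mem_comap] using
    skron_le_comap_reshape hx

def colFactor (V : Submodule ℝ (Fin (m * n) → ℝ)) : Submodule ℝ (Fin m → ℝ) :=
  ⨆ j, V.map (reshapeCol m n j)

def rowFactor (V : Submodule ℝ (Fin (m * n) → ℝ)) : Submodule ℝ (Fin n → ℝ) :=
  ⨆ i, V.map (reshapeRow m n i)

theorem le_skron_iff {V : Submodule ℝ (Fin (m * n) → ℝ)} :
    V ≤ skron S T ↔ colFactor V ≤ S ∧ rowFactor V ≤ T := by
  simp only [colFactor, rowFactor, iSup_le_iff, Submodule.map_le_iff_le_comap]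
  exact ⟨fun h => ⟨fun j x hx => (mem_skron_iff.mp (h hx)).1 j,
      fun i x hx => (mem_skron_iff.mp (h hx)).2 i⟩,
    fun h x hx => mem_skron_iff.mpr ⟨fun j => h.1 j hx, fun i => h.2 i hx⟩⟩

theorem le_skron_colFactor_rowFactor (V : Submodule ℝ (Fin (m * n) → ℝ)) :
    V ≤ skron (colFactor V) (rowFactor V) :=
  le_skron_iff.mpr ⟨le_rfl, le_rfl⟩

end Reshape

theorem kronecker_envelope_of_random_matrix_general (rL rR k : ℕ)
    {Ω : Type*} [MeasurableSpace Ω] (P : Measure Ω)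
    (U : Ω → Matrix (Fin (rR * rL)) (Fin k) ℝ) :
    ∃ (S₁ : Submodule ℝ (Fin rR → ℝ)) (S₂ : Submodule ℝ (Fin rL → ℝ)),
      (∀ᵐ ω ∂P, colSpan (U ω) ≤ skron S₁ S₂) ∧
        ∀ (S₁' : Submodule ℝ (Fin rR → ℝ)) (S₂' : Submodule ℝ (Fin rL → ℝ)),
          (∀ᵐ ω ∂P, colSpan (U ω) ≤ skron S₁' S₂') → skron S₁ S₂ ≤ skron S₁' S₂' := by
  obtain ⟨V₀, hV₀, hleast⟩ := exists_least_eventually_ge (ae P) fun ω => colSpan (U ω)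
  refine ⟨colFactor V₀, rowFactor V₀,
    hV₀.mono fun ω h => h.trans (le_skron_colFactor_rowFactor V₀), fun S₁' S₂' h' => ?_⟩
  obtain ⟨hS₁, hS₂⟩ := le_skron_iff.mp (hleast _ h')
  exact skron_mono hS₁ hS₂

/-- Theorem 1: existence of the Kronecker envelope of a square-integrable random matrix
`U : Ω → ℝ^{(r_R r_L) × k}`: there is a smallest Kronecker-product subspace `S₁ ⊗ S₂`
containing the column space of `U` almost surely. -/
theorem kronecker_envelope_of_random_matrix (rL rR k : ℕ)
    (hL : 0 < rL) (hR : 0 < rR) (hk : 0 < k)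
    {Ω : Type*} [MeasurableSpace Ω] (P : Measure Ω) [IsProbabilityMeasure P]
    (U : Ω → Matrix (Fin (rR * rL)) (Fin k) ℝ) (hU : Measurable U)
    (hL2 : ∀ i j, MemLp (fun ω => U ω i j) 2 P) :
    ∃ (S₁ : Submodule ℝ (Fin rR → ℝ)) (S₂ : Submodule ℝ (Fin rL → ℝ)),
      (∀ᵐ ω ∂P, colSpan (U ω) ≤ skron S₁ S₂) ∧
        ∀ (S₁' : Submodule ℝ (Fin rR → ℝ)) (S₂' : Submodule ℝ (Fin rL → ℝ)),
          (∀ᵐ ω ∂P, colSpan (U ω) ≤ skron S₁' S₂') → skron S₁ S₂ ≤ skron S₁' S₂' :=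
  kronecker_envelope_of_random_matrix_general rL rR k P U
end

section
/- Let A ∈ ℝ^{N × p_R p_L}, a ∈ ℝ^{p_L × m_L}, b ∈ ℝ^{p_R × m_R}, and f ∈ ℝ^{m_R m_L × k}. Then vec[A (b ⊗ a) f] = (fᵀ ⊗ A) Π (I_{p_R m_R} ⊗ vec(a)) vec(b), where Π = I_{m_R} ⊗ [(I_{m_L} ⊗ K_{p_R,p_L}) K_{p_L m_L, p_R}]. In particular, for fixed a and f the map b ↦ vec[A (b ⊗ a) f] is linear in vec(b) with coefficient matrix (fᵀ ⊗ A) Π (I_{p_R m_R} ⊗ vec(a)). -/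
open Matrix MeasureTheory ProbabilityTheory

/-- The commutation matrix `K_{m,n}`, the unique `mn × mn` matrix such that
`K_{m,n} vec(A) = vec(Aᵀ)` for every `A : Matrix (Fin m) (Fin n) ℝ`. -/
def commF (m n : ℕ) : Matrix (Fin (m * n)) (Fin (n * m)) ℝ :=
  Matrix.of fun p q =>
    if (finProdFinEquiv.symm p : Fin m × Fin n) = (finProdFinEquiv.symm q : Fin n × Fin m).swap
    then 1 else 0

/-- A vector viewed as a one-column matrix. -/
def colM {n : ℕ} (v : Fin n → ℝ) : Matrix (Fin n) (Fin 1) ℝ :=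
  Matrix.of fun i _ => v i

/-- Cast a vector along an equality of dimensions (the identity map on `ℝ^m`). -/
def castV {m m' : ℕ} (h : m = m') (v : Fin m → ℝ) : Fin m' → ℝ :=
  v ∘ (finCongr h.symm)

/-- The matrix `Π = I_{r₂} ⊗ [(I_{r₄} ⊗ K_{r₁,r₃}) K_{r₃r₄,r₁}]` of Lemma 1
(dimension-equalities are handled by the identity reindexing `finCongr`). -/
noncomputable def PiMat (r1 r2 r3 r4 : ℕ) :
    Matrix (Fin (r2 * (r4 * (r1 * r3)))) (Fin (r2 * (r1 * (r4 * r3)))) ℝ :=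
  kronF (1 : Matrix (Fin r2) (Fin r2) ℝ)
    ((kronF (1 : Matrix (Fin r4) (Fin r4) ℝ) (commF r1 r3)) *
      (Matrix.reindex (finCongr (show (r4 * r3) * r1 = r4 * (r3 * r1) by ring)) (Equiv.refl _)
        (commF (r4 * r3) r1)))

/-
Two classical vec identities combine: `vec (A X B) = (Bᵀ ⊗ A) vec X`, applied with `X = b ⊗ a`,
and `vec (b ⊗ a) = Π (vec b ⊗ vec a)`, where `vec b ⊗ vec a = (I ⊗ vec a) vec b`. The second is
a pure index permutation: `Π` moves the entry of `vec b ⊗ vec a` at `(u₁, v₁, u₂, v₂)` to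
position `(u₁, u₂, v₁, v₂)`, which is where `vec (b ⊗ a)` stores `b v₁ u₁ * a v₂ u₂`.
-/

section FlatIndices

variable {m n p q r : ℕ}

theorem sum_fin_mul {M : Type*} [AddCommMonoid M] (g : Fin (m * n) → M) :
    ∑ x, g x = ∑ i : Fin m, ∑ j : Fin n, g (finProdFinEquiv (i, j)) := by
  rw [← Equiv.sum_comp finProdFinEquiv g, Fintype.sum_prod_type]

theorem finCongr_finProdFinEquiv_assoc (h : m * (n * p) = m * n * p)
    (i : Fin m) (j : Fin n) (k : Fin p) :
    finCongr h (finProdFinEquiv (i, finProdFinEquiv (j, k))) =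
      finProdFinEquiv (finProdFinEquiv (i, j), k) := by
  apply Fin.ext; simp [finProdFinEquiv]; ring

theorem finCongr_finProdFinEquiv_assoc_symm (h : m * n * p = m * (n * p))
    (i : Fin m) (j : Fin n) (k : Fin p) :
    finCongr h (finProdFinEquiv (finProdFinEquiv (i, j), k)) =
      finProdFinEquiv (i, finProdFinEquiv (j, k)) := by
  apply Fin.ext; simp [finProdFinEquiv]; ring

theorem vecF_apply (A : Matrix (Fin m) (Fin n) ℝ) (i : Fin m) (j : Fin n) :
    vecF A (finProdFinEquiv (j, i)) = A i j := by
  simp only [vecF, Equiv.symm_apply_apply]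

theorem vkronF_apply (v : Fin m → ℝ) (w : Fin n → ℝ) (i : Fin m) (j : Fin n) :
    vkronF v w (finProdFinEquiv (i, j)) = v i * w j := by
  simp only [vkronF, Equiv.symm_apply_apply]

theorem kronF_apply (A : Matrix (Fin m) (Fin n) ℝ) (B : Matrix (Fin p) (Fin q) ℝ)
    (i : Fin m) (j : Fin n) (k : Fin p) (l : Fin q) :
    kronF A B (finProdFinEquiv (i, k)) (finProdFinEquiv (j, l)) = A i j * B k l := by
  simp only [kronF, Matrix.of_apply, Equiv.symm_apply_apply]

theorem kronF_mulVec_apply (A : Matrix (Fin m) (Fin n) ℝ) (B : Matrix (Fin p) (Fin q) ℝ)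
    (v : Fin (n * q) → ℝ) (i : Fin m) (k : Fin p) :
    (kronF A B *ᵥ v) (finProdFinEquiv (i, k)) =
      ∑ j, ∑ l, A i j * B k l * v (finProdFinEquiv (j, l)) := by
  simp only [Matrix.mulVec, dotProduct, sum_fin_mul, kronF_apply]

theorem one_kronF_mulVec_apply (B : Matrix (Fin p) (Fin q) ℝ) (v : Fin (r * q) → ℝ)
    (i : Fin r) (k : Fin p) :
    (kronF (1 : Matrix (Fin r) (Fin r) ℝ) B *ᵥ v) (finProdFinEquiv (i, k)) =
      (B *ᵥ fun l => v (finProdFinEquiv (i, l))) k := by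
  rw [kronF_mulVec_apply]
  simp [Matrix.one_apply, Matrix.mulVec, dotProduct]

theorem commF_mulVec_apply (v : Fin (n * m) → ℝ) (i : Fin m) (j : Fin n) :
    (commF m n *ᵥ v) (finProdFinEquiv (i, j)) = v (finProdFinEquiv (j, i)) := by
  simp only [Matrix.mulVec, dotProduct, sum_fin_mul, commF, Matrix.of_apply,
    Equiv.symm_apply_apply, Prod.swap_prod_mk, Prod.mk.injEq, ite_and, ite_mul, one_mul,
    zero_mul]
  rw [Finset.sum_comm]
  simp

theorem one_kronF_colM_mulVec (h : r = r * 1) (w : Fin r → ℝ) (v : Fin n → ℝ) :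
    kronF (1 : Matrix (Fin r) (Fin r) ℝ) (colM v) *ᵥ castV h w = vkronF w v := by
  funext x
  obtain ⟨⟨i, k⟩, rfl⟩ := finProdFinEquiv.surjective x
  have hcast : finCongr h.symm (finProdFinEquiv (i, 0)) = i := Fin.ext (by simp [finProdFinEquiv])
  rw [one_kronF_mulVec_apply]
  simp only [Matrix.mulVec, dotProduct, Fin.sum_univ_one, colM, Matrix.of_apply, castV,
    Function.comp_apply, hcast, vkronF_apply, mul_comm]

theorem vecF_mul_mul (A : Matrix (Fin m) (Fin n) ℝ) (X : Matrix (Fin n) (Fin p) ℝ)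
    (B : Matrix (Fin p) (Fin q) ℝ) :
    vecF (A * X * B) = kronF Bᵀ A *ᵥ vecF X := by
  funext x
  obtain ⟨⟨j, i⟩, rfl⟩ := finProdFinEquiv.surjective x
  simp only [vecF_apply, kronF_mulVec_apply, Matrix.mul_apply, Matrix.transpose_apply,
    Finset.sum_mul]
  exact Finset.sum_congr rfl fun _ _ => Finset.sum_congr rfl fun _ _ => by ring

end FlatIndices

theorem PiMat_mulVec_apply (r1 r2 r3 r4 : ℕ) (w : Fin (r2 * (r1 * (r4 * r3))) → ℝ)
    (i1 : Fin r1) (i2 : Fin r2) (i3 : Fin r3) (i4 : Fin r4) :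
    (PiMat r1 r2 r3 r4 *ᵥ w)
        (finProdFinEquiv (i2, finProdFinEquiv (i4, finProdFinEquiv (i1, i3)))) =
      w (finProdFinEquiv (i2, finProdFinEquiv (i1, finProdFinEquiv (i4, i3)))) := by
  rw [PiMat, one_kronF_mulVec_apply, ← Matrix.mulVec_mulVec, one_kronF_mulVec_apply,
    commF_mulVec_apply, Matrix.reindex_apply, Matrix.submatrix_mulVec_equiv]
  simp only [Function.comp_apply, finCongr_symm, Equiv.refl_symm, Equiv.coe_refl,
    Function.comp_id, finCongr_finProdFinEquiv_assoc]
  rw [commF_mulVec_apply]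

theorem vecF_kronF {pR pL mR mL : ℕ} (b : Matrix (Fin pR) (Fin mR) ℝ)
    (a : Matrix (Fin pL) (Fin mL) ℝ)
    (h : mR * (mL * (pR * pL)) = mR * mL * (pR * pL))
    (h' : mR * pR * (mL * pL) = mR * (pR * (mL * pL))) :
    vecF (kronF b a) = castV h (PiMat pR mR pL mL *ᵥ castV h' (vkronF (vecF b) (vecF a))) := by
  funext x
  obtain ⟨⟨u, v⟩, rfl⟩ := finProdFinEquiv.surjective x
  obtain ⟨⟨u1, u2⟩, rfl⟩ := finProdFinEquiv.surjective u
  obtain ⟨⟨v1, v2⟩, rfl⟩ := finProdFinEquiv.surjective v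
  simp only [castV, Function.comp_apply, finCongr_finProdFinEquiv_assoc_symm,
    PiMat_mulVec_apply, finCongr_finProdFinEquiv_assoc, vkronF_apply, vecF_apply, kronF_apply]

/-- `vec[A (b ⊗ a) f] = (fᵀ ⊗ A) Π (I_{p_R m_R} ⊗ vec(a)) vec(b)`:
the map `b ↦ vec[A (b ⊗ a) f]` is linear in `vec(b)` with this coefficient matrix. -/
theorem vec_A_kron_f_linear_in_b (N pR pL mR mL k : ℕ)
    (A : Matrix (Fin N) (Fin (pR * pL)) ℝ) (a : Matrix (Fin pL) (Fin mL) ℝ)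
    (b : Matrix (Fin pR) (Fin mR) ℝ) (f : Matrix (Fin (mR * mL)) (Fin k) ℝ) :
    vecF (A * kronF b a * f) =
      kronF fᵀ A *ᵥ
        castV (show mR * (mL * (pR * pL)) = (mR * mL) * (pR * pL) by ring)
          (PiMat pR mR pL mL *ᵥ
            castV (show (mR * pR) * (mL * pL) = mR * (pR * (mL * pL)) by ring)
              (kronF (1 : Matrix (Fin (mR * pR)) (Fin (mR * pR)) ℝ) (colM (vecF a)) *ᵥ
                castV (show mR * pR = (mR * pR) * 1 by ring) (vecF b))) := by
  rw [vecF_mul_mul, one_kronF_colM_mulVec, vecF_kronF]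
end

section
/- Let A ∈ ℝ^{N × p_R p_L}, a ∈ ℝ^{p_L × m_L}, b ∈ ℝ^{p_R × m_R}, and f ∈ ℝ^{m_R m_L × k}. Then vec[A (b ⊗ a) f] = (fᵀ ⊗ A) Π (vec(b) ⊗ I_{p_L m_L}) vec(a), where Π = I_{m_R} ⊗ [(I_{m_L} ⊗ K_{p_R,p_L}) K_{p_L m_L, p_R}]. In particular, for fixed b and f the map a ↦ vec[A (b ⊗ a) f] is linear in vec(a) with coefficient matrix (fᵀ ⊗ A) Π (vec(b) ⊗ I_{p_L m_L}). -/
open Matrix MeasureTheory ProbabilityTheory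

lemma finCongr_assoc {a b c : ℕ} (h : a * (b * c) = a * b * c)
    (i : Fin a) (j : Fin b) (l : Fin c) :
    finCongr h (finProdFinEquiv (i, finProdFinEquiv (j, l))) =
      finProdFinEquiv (finProdFinEquiv (i, j), l) := by
  ext; simp [finProdFinEquiv]; ring

lemma finCongr_assoc' {a b c : ℕ} (h : a * b * c = a * (b * c))
    (i : Fin a) (j : Fin b) (l : Fin c) :
    finCongr h (finProdFinEquiv (finProdFinEquiv (i, j), l)) =
      finProdFinEquiv (i, finProdFinEquiv (j, l)) := by
  ext; simp [finProdFinEquiv]; ring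

lemma finCongr_one {n : ℕ} (h : 1 * n = n) (z : Fin 1) (q : Fin n) :
    finCongr h (finProdFinEquiv (z, q)) = q := by
  ext; simp [finProdFinEquiv, Subsingleton.elim z 0]

lemma commF_apply {m n : ℕ} (p1 : Fin m) (p2 : Fin n) (q : Fin (n * m)) :
    commF m n (finProdFinEquiv (p1, p2)) q =
      if q = finProdFinEquiv (p2, p1) then 1 else 0 := by
  simp only [commF, Matrix.of_apply, Equiv.symm_apply_apply]
  congr 1
  rw [show ((p1, p2) = (finProdFinEquiv.symm q : Fin n × Fin m).swap) ↔
      (finProdFinEquiv.symm q : Fin n × Fin m) = (p2, p1) by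
    constructor <;> intro h' <;> [skip; skip] <;> · simp_all [Prod.ext_iff]]
  rw [Equiv.symm_apply_eq]

lemma sum_fin_mul_s11 {a b : ℕ} (f : Fin (a * b) → ℝ) :
    ∑ x, f x = ∑ p : Fin a, ∑ q : Fin b, f (finProdFinEquiv (p, q)) := by
  rw [← Equiv.sum_comp finProdFinEquiv f]
  exact Fintype.sum_prod_type _

set_option maxHeartbeats 4000000 in
/-- `vec[A (b ⊗ a) f] = (fᵀ ⊗ A) Π (vec(b) ⊗ I_{p_L m_L}) vec(a)`:
the map `a ↦ vec[A (b ⊗ a) f]` is linear in `vec(a)` with this coefficient matrix. -/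
theorem vec_A_kron_f_linear_in_a (N pR pL mR mL k : ℕ)
    (A : Matrix (Fin N) (Fin (pR * pL)) ℝ) (a : Matrix (Fin pL) (Fin mL) ℝ)
    (b : Matrix (Fin pR) (Fin mR) ℝ) (f : Matrix (Fin (mR * mL)) (Fin k) ℝ) :
    vecF (A * kronF b a * f) =
      kronF fᵀ A *ᵥ
        castV (show mR * (mL * (pR * pL)) = (mR * mL) * (pR * pL) by ring)
          (PiMat pR mR pL mL *ᵥ
            castV (show (mR * pR) * (mL * pL) = mR * (pR * (mL * pL)) by ring)
              (kronF (colM (vecF b)) (1 : Matrix (Fin (mL * pL)) (Fin (mL * pL)) ℝ) *ᵥ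
                castV (show mL * pL = 1 * (mL * pL) by ring) (vecF a))) := by
  funext x
  obtain ⟨⟨j, i⟩, rfl⟩ := finProdFinEquiv.surjective x
  simp only [vecF, Equiv.symm_apply_apply, Matrix.mul_apply, mulVec, dotProduct,
    castV, PiMat, kronF, commF_apply, colM, Matrix.of_apply, Function.comp_apply,
    Matrix.reindex_apply, Matrix.submatrix_apply, Equiv.refl_symm, Equiv.refl_apply,
    finCongr_symm]
  simp only [sum_fin_mul_s11, Equiv.symm_apply_apply, finCongr_assoc, finCongr_assoc',
    finCongr_one, Matrix.one_apply, Equiv.apply_eq_iff_eq, Prod.mk.injEq,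
    mul_ite, ite_mul, one_mul, mul_one, zero_mul, mul_zero,
    Finset.sum_ite_eq, Finset.sum_ite_eq', Finset.mem_univ, if_true]
  simp only [commF_apply, Matrix.transpose_apply, Fin.sum_univ_one, Equiv.apply_eq_iff_eq,
    Prod.mk.injEq, mul_ite, ite_mul, one_mul, mul_one, zero_mul, mul_zero, ite_and,
    Finset.sum_ite_eq, Finset.sum_ite_eq', Finset.mem_univ, if_true, Finset.sum_ite_irrel,
    Finset.sum_const_zero]
  simp only [Finset.sum_mul]
  apply Finset.sum_congr rfl; intros; apply Finset.sum_congr rfl; intros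
  apply Finset.sum_congr rfl; intros; apply Finset.sum_congr rfl; intros
  ring
end

section
/- (Theorem 3.) Let (Ω, 𝓕, P) be a probability space, W : Ω → ℝ^d measurable, and u : ℝ^d → ℝ^{p_R p_L × k} measurable with E‖u(W)‖² < ∞; write U = u(W). Let A ∈ ℝ^{p_R p_L × p_R p_L} be nonsingular. Suppose α₀ ∈ ℝ^{p_L × m_L} and β₀ ∈ ℝ^{p_R × m_R} have full column rank and span(β₀ ⊗ α₀) is the Kronecker envelope of U, i.e., (i) span(U(ω)) ⊆ span(β₀ ⊗ α₀) for P-almost every ω, and (ii) for any subspaces S_R ⊆ ℝ^{p_R}, S_L ⊆ ℝ^{p_L} with span(U(ω)) ⊆ S_R ⊗ S_L almost surely, span(β₀ ⊗ α₀) ⊆ S_R ⊗ S_L. If (a*, b*, f*), with a* ∈ ℝ^{p_L × m_L}, b* ∈ ℝ^{p_R × m_R}, and f* : ℝ^d → ℝ^{m_L m_R × k} measurable with E‖f*(W)‖² < ∞, attains the minimum of E‖A U − A (b ⊗ a) f(W)‖² over all such triples (a, b, f), then span(b* ⊗ a*) = span(β₀ ⊗ α₀). Moreover, the minimum value is 0.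 -/
open Matrix MeasureTheory ProbabilityTheory

/-!
On the envelope `U = u(W)` lies in `span(β₀ ⊗ α₀)` almost surely, and `β₀ ⊗ α₀` has the left
inverse `L = Lβ ⊗ Lα`; hence `U = (β₀ ⊗ α₀) (L U)` a.s., the objective vanishes at `(α₀, β₀, L u)`
and the minimum is `0`. A minimizer then has `A U = A (b* ⊗ a*) f*(W)` a.s., so
`U = (b* ⊗ a*) f*(W)` since `A` is invertible, and `span U ⊆ span b* ⊗ span a*` a.s. Minimality of
the envelope gives `span(β₀ ⊗ α₀) ⊆ span(b* ⊗ a*)`; the left side has dimension `m_R m_L` and the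
right side at most that, so the two are equal.
-/

open Module

open Kronecker in
theorem kronF_eq_reindex {m n p q : ℕ} (A : Matrix (Fin m) (Fin n) ℝ)
    (B : Matrix (Fin p) (Fin q) ℝ) :
    kronF A B = Matrix.reindex finProdFinEquiv finProdFinEquiv (A ⊗ₖ B) := rfl

theorem kronF_mul_kronF {m n p m' n' p' : ℕ} (A : Matrix (Fin m) (Fin n) ℝ)
    (B : Matrix (Fin m') (Fin n') ℝ) (C : Matrix (Fin n) (Fin p) ℝ)
    (D : Matrix (Fin n') (Fin p') ℝ) :
    kronF A B * kronF C D = kronF (A * C) (B * D) := by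
  simp only [kronF_eq_reindex, Matrix.reindex_apply, Matrix.submatrix_mul_equiv,
    Matrix.mul_kronecker_mul]

theorem kronF_one_one (n n' : ℕ) :
    kronF (1 : Matrix (Fin n) (Fin n) ℝ) (1 : Matrix (Fin n') (Fin n') ℝ) = 1 := by
  rw [kronF_eq_reindex, Matrix.one_kronecker_one, Matrix.reindex_apply,
    Matrix.submatrix_one_equiv]

def vkronBilin {m n : ℕ} : (Fin m → ℝ) →ₗ[ℝ] (Fin n → ℝ) →ₗ[ℝ] (Fin (m * n) → ℝ) :=
  LinearMap.mk₂ ℝ vkronF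
    (fun v v' w => by funext x; simp only [vkronF, Pi.add_apply]; ring)
    (fun c v w => by funext x; simp only [vkronF, Pi.smul_apply, smul_eq_mul]; ring)
    (fun v w w' => by funext x; simp only [vkronF, Pi.add_apply]; ring)
    (fun c v w => by funext x; simp only [vkronF, Pi.smul_apply, smul_eq_mul]; ring)

theorem skron_eq_map₂ {m n : ℕ} (S : Submodule ℝ (Fin m → ℝ)) (T : Submodule ℝ (Fin n → ℝ)) :
    skron S T = Submodule.map₂ vkronBilin S T := by
  apply le_antisymm
  · refine Submodule.span_le.mpr ?_
    rintro x ⟨v, hv, w, hw, rfl⟩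
    exact Submodule.apply_mem_map₂ vkronBilin hv hw
  · exact Submodule.map₂_le.mpr fun v hv w hw => Submodule.subset_span ⟨v, hv, w, hw, rfl⟩

theorem colSpan_eq_range_mulVecLin {N k : ℕ} (U : Matrix (Fin N) (Fin k) ℝ) :
    colSpan U = LinearMap.range U.mulVecLin := by
  rw [Matrix.range_mulVecLin]; rfl

theorem rank_eq_finrank_colSpan {N k : ℕ} (U : Matrix (Fin N) (Fin k) ℝ) :
    U.rank = finrank ℝ (colSpan U) := by
  rw [colSpan_eq_range_mulVecLin]; rfl

theorem colSpan_kronF {p q r s : ℕ} (B : Matrix (Fin p) (Fin r) ℝ) (A : Matrix (Fin q) (Fin s) ℝ) :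
    colSpan (kronF B A) = skron (colSpan B) (colSpan A) := by
  rw [skron_eq_map₂, colSpan, colSpan, colSpan, Submodule.map₂_span_span]
  congr 1
  ext x
  constructor
  · rintro ⟨j, rfl⟩
    exact ⟨_, ⟨(finProdFinEquiv.symm j).1, rfl⟩, _, ⟨(finProdFinEquiv.symm j).2, rfl⟩, rfl⟩
  · rintro ⟨v, ⟨j, rfl⟩, w, ⟨l, rfl⟩, rfl⟩
    refine ⟨finProdFinEquiv (j, l), funext fun i => ?_⟩
    simp only [vkronBilin, LinearMap.mk₂_apply, vkronF, kronF, Matrix.of_apply,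
      Equiv.symm_apply_apply]

theorem colSpan_mul_le {N r k : ℕ} (M : Matrix (Fin N) (Fin r) ℝ) (C : Matrix (Fin r) (Fin k) ℝ) :
    colSpan (M * C) ≤ colSpan M := by
  rw [colSpan_eq_range_mulVecLin, colSpan_eq_range_mulVecLin, Matrix.mulVecLin_mul]
  exact LinearMap.range_comp_le_range _ _

theorem exists_eq_mul_of_colSpan_le {N r k : ℕ} {U : Matrix (Fin N) (Fin k) ℝ}
    {M : Matrix (Fin N) (Fin r) ℝ} (h : colSpan U ≤ colSpan M) :
    ∃ C : Matrix (Fin r) (Fin k) ℝ, U = M * C := by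
  have hcol : ∀ j, ∃ c, M *ᵥ c = fun i => U i j := fun j => by
    simpa [colSpan_eq_range_mulVecLin] using h (Submodule.subset_span ⟨j, rfl⟩)
  choose c hc using hcol
  refine ⟨Matrix.of fun l j => c j l, ?_⟩
  ext i j
  rw [← congrFun (hc j) i, Matrix.mul_apply]
  rfl

theorem rank_eq_width_of_mul_eq_one {N r : ℕ} {M : Matrix (Fin N) (Fin r) ℝ}
    {L : Matrix (Fin r) (Fin N) ℝ} (h : L * M = 1) : M.rank = r :=
  le_antisymm M.rank_le_width (by simpa [h] using Matrix.rank_mul_le_right L M)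

theorem exists_mul_eq_one_of_rank_eq_width {N r : ℕ} {M : Matrix (Fin N) (Fin r) ℝ}
    (h : M.rank = r) : ∃ L : Matrix (Fin r) (Fin N) ℝ, L * M = 1 := by
  have hker : LinearMap.ker M.mulVecLin = ⊥ := by
    have hdim := M.mulVecLin.finrank_range_add_finrank_ker
    rw [finrank_pi, Fintype.card_fin] at hdim
    have hrange : finrank ℝ (LinearMap.range M.mulVecLin) = r := h
    exact Submodule.finrank_eq_zero.mp (by omega)
  obtain ⟨g, hg⟩ := M.mulVecLin.exists_leftInverse_of_injective hker
  refine ⟨LinearMap.toMatrix' g, Matrix.toLin'.injective ?_⟩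
  rw [Matrix.toLin'_mul, Matrix.toLin'_toMatrix', Matrix.toLin'_one, Matrix.toLin'_apply']
  exact hg

theorem colSpan_eq_of_le_of_rank_eq_width {N r : ℕ} {M M' : Matrix (Fin N) (Fin r) ℝ}
    (hM : M.rank = r) (h : colSpan M ≤ colSpan M') : colSpan M = colSpan M' := by
  refine Submodule.eq_of_le_of_finrank_le h ?_
  rw [← rank_eq_finrank_colSpan, ← rank_eq_finrank_colSpan, hM]
  exact M'.rank_le_width

theorem sum_sum_sq_eq_zero_iff {m n R : Type*} [Fintype m] [Fintype n] [Ring R] [LinearOrder R]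
    [IsStrictOrderedRing R] (X : Matrix m n R) : ∑ i, ∑ j, X i j ^ 2 = 0 ↔ X = 0 := by
  simp [Finset.sum_eq_zero_iff_of_nonneg, sq_nonneg, Finset.sum_nonneg, ← Matrix.ext_iff]

theorem Measurable.const_matrix_mul {α : Type*} [MeasurableSpace α] {N r k : ℕ}
    (L : Matrix (Fin r) (Fin N) ℝ) {f : α → Matrix (Fin N) (Fin k) ℝ} (hf : Measurable f) :
    Measurable fun x => L * f x := by
  refine measurable_pi_lambda _ fun i => measurable_pi_lambda _ fun j => ?_
  simp only [Matrix.mul_apply]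
  exact Finset.measurable_sum _ fun l _ =>
    measurable_const.mul ((measurable_pi_apply j).comp ((measurable_pi_apply l).comp hf))

section Integral

variable {Ω : Type*} [MeasurableSpace Ω] {P : Measure Ω} {m n o : Type*} [Fintype n]

theorem memLp_matrix_mul_apply {F : Ω → Matrix n o ℝ}
    (hF : ∀ i j, MemLp (fun ω => F ω i j) 2 P) (C : Matrix m n ℝ) :
    ∀ i j, MemLp (fun ω => (C * F ω) i j) 2 P := by
  intro i j
  simp only [Matrix.mul_apply]
  exact memLp_finsetSum _ fun l _ => (hF l j).const_mul _

theorem memLp_matrix_mul_sub_mul_apply {n' : Type*} [Fintype n']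
    {F : Ω → Matrix n o ℝ} {G : Ω → Matrix n' o ℝ} (hF : ∀ i j, MemLp (fun ω => F ω i j) 2 P)
    (hG : ∀ i j, MemLp (fun ω => G ω i j) 2 P) (C : Matrix m n ℝ) (D : Matrix m n' ℝ) :
    ∀ i j, MemLp (fun ω => (C * F ω - D * G ω) i j) 2 P := fun i j =>
  (memLp_matrix_mul_apply hF C i j).sub (memLp_matrix_mul_apply hG D i j)

theorem integral_sum_sum_sq_eq_zero_iff [Fintype m] {F : Ω → Matrix m n ℝ}
    (hF : ∀ i j, MemLp (fun ω => F ω i j) 2 P) :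
    ∫ ω, ∑ i, ∑ j, F ω i j ^ 2 ∂P = 0 ↔ F =ᵐ[P] 0 := by
  have hint : Integrable (fun ω => ∑ i, ∑ j, F ω i j ^ 2) P :=
    integrable_finsetSum _ fun i _ => integrable_finsetSum _ fun j _ => (hF i j).integrable_sq
  rw [integral_eq_zero_iff_of_nonneg (fun ω => by positivity) hint]
  exact Filter.eventually_congr (.of_forall fun ω => sum_sum_sq_eq_zero_iff (F ω))

end Integral

theorem kronecker_envelope_objective_general {Ω : Type*} [mΩ : MeasurableSpace Ω]
    (P : Measure Ω)
    (d pR pL mR mL k : ℕ)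
    (W : Ω → Fin d → ℝ)
    (u : (Fin d → ℝ) → Matrix (Fin (pR * pL)) (Fin k) ℝ) (hu : Measurable u)
    (huL2 : ∀ i j, MemLp (fun ω => u (W ω) i j) 2 P)
    (A : Matrix (Fin (pR * pL)) (Fin (pR * pL)) ℝ) (hA : IsUnit A)
    (α0 : Matrix (Fin pL) (Fin mL) ℝ) (β0 : Matrix (Fin pR) (Fin mR) ℝ)
    (hα0 : α0.rank = mL) (hβ0 : β0.rank = mR)
    (henv1 : ∀ᵐ ω ∂P, colSpan (u (W ω)) ≤ colSpan (kronF β0 α0))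
    (henv2 : ∀ (SR : Submodule ℝ (Fin pR → ℝ)) (SL : Submodule ℝ (Fin pL → ℝ)),
      (∀ᵐ ω ∂P, colSpan (u (W ω)) ≤ skron SR SL) → colSpan (kronF β0 α0) ≤ skron SR SL)
    (astar : Matrix (Fin pL) (Fin mL) ℝ) (bstar : Matrix (Fin pR) (Fin mR) ℝ)
    (fstar : (Fin d → ℝ) → Matrix (Fin (mR * mL)) (Fin k) ℝ)
    (hfstarL2 : ∀ i j, MemLp (fun ω => fstar (W ω) i j) 2 P)
    (hmin : ∀ (a : Matrix (Fin pL) (Fin mL) ℝ) (b : Matrix (Fin pR) (Fin mR) ℝ)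
        (f : (Fin d → ℝ) → Matrix (Fin (mR * mL)) (Fin k) ℝ),
        Measurable f → (∀ i j, MemLp (fun ω => f (W ω) i j) 2 P) →
        ∫ ω, ∑ i, ∑ j, (A * u (W ω) - A * kronF bstar astar * fstar (W ω)) i j ^ 2 ∂P ≤
          ∫ ω, ∑ i, ∑ j, (A * u (W ω) - A * kronF b a * f (W ω)) i j ^ 2 ∂P) :
    colSpan (kronF bstar astar) = colSpan (kronF β0 α0) ∧
      ∫ ω, ∑ i, ∑ j, (A * u (W ω) - A * kronF bstar astar * fstar (W ω)) i j ^ 2 ∂P = 0 := by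
  obtain ⟨Lα, hLα⟩ := exists_mul_eq_one_of_rank_eq_width hα0
  obtain ⟨Lβ, hLβ⟩ := exists_mul_eq_one_of_rank_eq_width hβ0
  obtain ⟨L, hL⟩ : ∃ L : Matrix (Fin (mR * mL)) (Fin (pR * pL)) ℝ, L * kronF β0 α0 = 1 :=
    ⟨kronF Lβ Lα, by rw [kronF_mul_kronF, hLα, hLβ, kronF_one_one]⟩
  have hfactor : ∀ᵐ ω ∂P, u (W ω) = kronF β0 α0 * (L * u (W ω)) := by
    filter_upwards [henv1] with ω hω
    obtain ⟨C, hC⟩ := exists_eq_mul_of_colSpan_le hω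
    rw [hC, ← Matrix.mul_assoc L, hL, Matrix.one_mul]
  have hmin_zero :
      ∫ ω, ∑ i, ∑ j, (A * u (W ω) - A * kronF bstar astar * fstar (W ω)) i j ^ 2 ∂P = 0 := by
    refine le_antisymm ((hmin α0 β0 _ (hu.const_matrix_mul L)
      (memLp_matrix_mul_apply huL2 L)).trans_eq ?_) (integral_nonneg fun ω => by positivity)
    rw [integral_sum_sum_sq_eq_zero_iff (memLp_matrix_mul_sub_mul_apply huL2
      (memLp_matrix_mul_apply huL2 L) _ _)]
    filter_upwards [hfactor] with ω hω
    rw [Matrix.mul_assoc, ← hω, sub_self, Pi.zero_apply]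
  have hrep : ∀ᵐ ω ∂P, u (W ω) = kronF bstar astar * fstar (W ω) := by
    filter_upwards [(integral_sum_sum_sq_eq_zero_iff
      (memLp_matrix_mul_sub_mul_apply huL2 hfstarL2 _ _)).mp hmin_zero] with ω hω
    let := hA.invertible
    apply Matrix.mul_right_injective_of_invertible A
    simpa [sub_eq_zero, Matrix.mul_assoc] using hω
  have hle : colSpan (kronF β0 α0) ≤ colSpan (kronF bstar astar) := by
    rw [colSpan_kronF bstar astar]
    refine henv2 _ _ (hrep.mono fun ω hω => ?_)
    rw [hω, ← colSpan_kronF]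
    exact colSpan_mul_le _ _
  exact ⟨(colSpan_eq_of_le_of_rank_eq_width (rank_eq_width_of_mul_eq_one hL) hle).symm, hmin_zero⟩

/-- Theorem 3: if `span(β₀ ⊗ α₀)` is the Kronecker envelope of the random matrix
`U = u(W)` (with `α₀`, `β₀` of full column rank), then any minimizer `(a*, b*, f*)` of
`E‖A U − A (b ⊗ a) f(W)‖²` satisfies `span(b* ⊗ a*) = span(β₀ ⊗ α₀)`, and the minimum
value is `0`. -/
theorem kronecker_envelope_objective {Ω : Type*} [mΩ : MeasurableSpace Ω]
    (P : Measure Ω) [IsProbabilityMeasure P]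
    (d pR pL mR mL k : ℕ)
    (W : Ω → Fin d → ℝ) (hW : Measurable W)
    (u : (Fin d → ℝ) → Matrix (Fin (pR * pL)) (Fin k) ℝ) (hu : Measurable u)
    (huL2 : ∀ i j, MemLp (fun ω => u (W ω) i j) 2 P)
    (A : Matrix (Fin (pR * pL)) (Fin (pR * pL)) ℝ) (hA : IsUnit A)
    (α0 : Matrix (Fin pL) (Fin mL) ℝ) (β0 : Matrix (Fin pR) (Fin mR) ℝ)
    (hα0 : α0.rank = mL) (hβ0 : β0.rank = mR)
    (henv1 : ∀ᵐ ω ∂P, colSpan (u (W ω)) ≤ colSpan (kronF β0 α0))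
    (henv2 : ∀ (SR : Submodule ℝ (Fin pR → ℝ)) (SL : Submodule ℝ (Fin pL → ℝ)),
      (∀ᵐ ω ∂P, colSpan (u (W ω)) ≤ skron SR SL) → colSpan (kronF β0 α0) ≤ skron SR SL)
    (astar : Matrix (Fin pL) (Fin mL) ℝ) (bstar : Matrix (Fin pR) (Fin mR) ℝ)
    (fstar : (Fin d → ℝ) → Matrix (Fin (mR * mL)) (Fin k) ℝ)
    (hfstarMeas : Measurable fstar)
    (hfstarL2 : ∀ i j, MemLp (fun ω => fstar (W ω) i j) 2 P)
    (hmin : ∀ (a : Matrix (Fin pL) (Fin mL) ℝ) (b : Matrix (Fin pR) (Fin mR) ℝ)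
        (f : (Fin d → ℝ) → Matrix (Fin (mR * mL)) (Fin k) ℝ),
        Measurable f → (∀ i j, MemLp (fun ω => f (W ω) i j) 2 P) →
        ∫ ω, ∑ i, ∑ j, (A * u (W ω) - A * kronF bstar astar * fstar (W ω)) i j ^ 2 ∂P ≤
          ∫ ω, ∑ i, ∑ j, (A * u (W ω) - A * kronF b a * f (W ω)) i j ^ 2 ∂P) :
    colSpan (kronF bstar astar) = colSpan (kronF β0 α0) ∧
      ∫ ω, ∑ i, ∑ j, (A * u (W ω) - A * kronF bstar astar * fstar (W ω)) i j ^ 2 ∂P = 0 :=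
  kronecker_envelope_objective_general (mΩ := mΩ) P d pR pL mR mL k W u hu huL2 A hA α0 β0 hα0 hβ0
    henv1 henv2 astar bstar fstar hfstarL2 hmin
end

section
/- Let p₁, p₂, p₃ be positive integers. For subspaces S_i, S̃_i ⊆ ℝ^{p_i} (i = 1, 2, 3), the threefold Kronecker-product subspaces of ℝ^{p₁ p₂ p₃} satisfy (S₁ ⊗ S₂ ⊗ S₃) ∩ (S̃₁ ⊗ S̃₂ ⊗ S̃₃) = (S₁ ∩ S̃₁) ⊗ (S₂ ∩ S̃₂) ⊗ (S₃ ∩ S̃₃). -/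
open Matrix MeasureTheory ProbabilityTheory

/-- The threefold Kronecker product of subspaces `S₁ ⊆ ℝ^{p₁}`, `S₂ ⊆ ℝ^{p₂}`,
`S₃ ⊆ ℝ^{p₃}`: the span in `ℝ^{p₁p₂p₃}` of all `v₁ ⊗ v₂ ⊗ v₃` with `vᵢ ∈ Sᵢ`. -/
def skron3 {p1 p2 p3 : ℕ} (S1 : Submodule ℝ (Fin p1 → ℝ)) (S2 : Submodule ℝ (Fin p2 → ℝ))
    (S3 : Submodule ℝ (Fin p3 → ℝ)) : Submodule ℝ (Fin (p1 * (p2 * p3)) → ℝ) :=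
  Submodule.span ℝ {x | ∃ v1 ∈ S1, ∃ v2 ∈ S2, ∃ v3 ∈ S3, x = vkronF v1 (vkronF v2 v3)}

namespace Kron3Aux

def E {p1 p2 p3 : ℕ} (i : Fin p1) (j : Fin p2) (k : Fin p3) : Fin (p1 * (p2 * p3)) :=
  finProdFinEquiv (i, finProdFinEquiv (j, k))

lemma exists_proj {p : ℕ} (S : Submodule ℝ (Fin p → ℝ)) :
    ∃ π : Matrix (Fin p) (Fin p) ℝ, (∀ v, π *ᵥ v ∈ S) ∧ ∀ v ∈ S, π *ᵥ v = v := by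
  obtain ⟨T, hT⟩ := S.exists_isCompl
  refine ⟨LinearMap.toMatrix' (S.subtype ∘ₗ S.linearProjOfIsCompl T hT), ?_, ?_⟩
  · intro v
    have h : (LinearMap.toMatrix' (S.subtype ∘ₗ S.linearProjOfIsCompl T hT)) *ᵥ v
        = (S.subtype ∘ₗ S.linearProjOfIsCompl T hT) v := by
      rw [← Matrix.toLin'_apply, Matrix.toLin'_toMatrix']
    rw [h]
    exact (S.linearProjOfIsCompl T hT v).2
  · intro v hv
    rw [← Matrix.toLin'_apply, Matrix.toLin'_toMatrix']
    have : S.linearProjOfIsCompl T hT v = ⟨v, hv⟩ :=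
      Submodule.linearProjOfIsCompl_apply_left hT ⟨v, hv⟩
    simp [this]

lemma fibers {p1 p2 p3 : ℕ} {S1 : Submodule ℝ (Fin p1 → ℝ)} {S2 : Submodule ℝ (Fin p2 → ℝ)}
    {S3 : Submodule ℝ (Fin p3 → ℝ)} {x : Fin (p1 * (p2 * p3)) → ℝ}
    (hx : x ∈ skron3 S1 S2 S3) :
    (∀ j k, (fun i => x (E i j k)) ∈ S1) ∧ (∀ i k, (fun j => x (E i j k)) ∈ S2) ∧
      (∀ i j, (fun k => x (E i j k)) ∈ S3) := by
  induction hx using Submodule.span_induction with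
  | mem x h =>
    obtain ⟨v1, hv1, v2, hv2, v3, hv3, rfl⟩ := h
    refine ⟨fun j k => ?_, fun i k => ?_, fun i j => ?_⟩
    · have h : (fun i => vkronF v1 (vkronF v2 v3) (E i j k)) = (v2 j * v3 k) • v1 := by
        funext i; simp [vkronF, E, smul_eq_mul]; ring
      rw [h]; exact S1.smul_mem _ hv1
    · have h : (fun j => vkronF v1 (vkronF v2 v3) (E i j k)) = (v1 i * v3 k) • v2 := by
        funext j; simp [vkronF, E, smul_eq_mul]; ring
      rw [h]; exact S2.smul_mem _ hv2
    · have h : (fun k => vkronF v1 (vkronF v2 v3) (E i j k)) = (v1 i * v2 j) • v3 := by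
        funext k; simp [vkronF, E, smul_eq_mul]; ring
      rw [h]; exact S3.smul_mem _ hv3
  | zero =>
    exact ⟨fun _ _ => S1.zero_mem, fun _ _ => S2.zero_mem, fun _ _ => S3.zero_mem⟩
  | add x y hx hy ihx ihy =>
    refine ⟨fun j k => ?_, fun i k => ?_, fun i j => ?_⟩
    · exact S1.add_mem (ihx.1 j k) (ihy.1 j k)
    · exact S2.add_mem (ihx.2.1 i k) (ihy.2.1 i k)
    · exact S3.add_mem (ihx.2.2 i j) (ihy.2.2 i j)
  | smul a x hx ih =>
    refine ⟨fun j k => ?_, fun i k => ?_, fun i j => ?_⟩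
    · exact S1.smul_mem a (ih.1 j k)
    · exact S2.smul_mem a (ih.2.1 i k)
    · exact S3.smul_mem a (ih.2.2 i j)


lemma e3_apply {p1 p2 p3 : ℕ} (i : Fin p1) (j : Fin p2) (k : Fin p3) :
    ((Equiv.prodCongr (Equiv.refl (Fin p1)) finProdFinEquiv).trans finProdFinEquiv)
      (i, (j, k)) = E i j k := rfl

lemma fibers_mem {p1 p2 p3 : ℕ} (S1 : Submodule ℝ (Fin p1 → ℝ)) (S2 : Submodule ℝ (Fin p2 → ℝ))
    (S3 : Submodule ℝ (Fin p3 → ℝ)) (x : Fin (p1 * (p2 * p3)) → ℝ)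
    (h1 : ∀ j k, (fun i => x (E i j k)) ∈ S1)
    (h2 : ∀ i k, (fun j => x (E i j k)) ∈ S2)
    (h3 : ∀ i j, (fun k => x (E i j k)) ∈ S3) :
    x ∈ skron3 S1 S2 S3 := by
  obtain ⟨A, hA, hA'⟩ := exists_proj S1
  obtain ⟨B, hB, hB'⟩ := exists_proj S2
  obtain ⟨C, hC, hC'⟩ := exists_proj S3
  set P : Matrix (Fin (p1 * (p2 * p3))) (Fin (p1 * (p2 * p3))) ℝ := kronF A (kronF B C) with hP
  have key : ∀ y, P *ᵥ y ∈ skron3 S1 S2 S3 := by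
    intro y
    have hy : P *ᵥ y = ∑ c : Fin (p1 * (p2 * p3)), y c • Pᵀ c := by
      funext r
      simp [Matrix.mulVec, dotProduct, Finset.sum_apply, Matrix.transpose_apply,
        mul_comm]
    rw [hy]
    refine Submodule.sum_mem _ fun c _ => Submodule.smul_mem _ _ ?_
    obtain ⟨⟨i, y'⟩, rfl⟩ := finProdFinEquiv.surjective c
    obtain ⟨⟨j, k⟩, rfl⟩ := finProdFinEquiv.surjective y'
    show Pᵀ (E i j k) ∈ skron3 S1 S2 S3
    have hcol : Pᵀ (E i j k) =
        vkronF (fun a => A a i) (vkronF (fun b => B b j) (fun c => C c k)) := by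
      funext r
      simp only [hP, kronF, vkronF, E, Matrix.transpose_apply, Matrix.of_apply,
        Equiv.symm_apply_apply]
    have m1 : (fun a => A a i) ∈ S1 := by
      have := hA (Pi.single i 1); rwa [Matrix.mulVec_single_one] at this
    have m2 : (fun b => B b j) ∈ S2 := by
      have := hB (Pi.single j 1); rwa [Matrix.mulVec_single_one] at this
    have m3 : (fun c => C c k) ∈ S3 := by
      have := hC (Pi.single k 1); rwa [Matrix.mulVec_single_one] at this
    exact Submodule.subset_span ⟨_, m1, _, m2, _, m3, hcol⟩
  have hfix : P *ᵥ x = x := by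
    funext c
    obtain ⟨⟨i, y'⟩, rfl⟩ := finProdFinEquiv.surjective c
    obtain ⟨⟨j, k⟩, rfl⟩ := finProdFinEquiv.surjective y'
    show (P *ᵥ x) (E i j k) = x (E i j k)
    have s1 : ∀ j' k', ∑ i', A i i' * x (E i' j' k') = x (E i j' k') := by
      intro j' k'
      have := congrFun (hA' _ (h1 j' k')) i
      simpa [Matrix.mulVec, dotProduct] using this
    have s2 : ∀ i' k', ∑ j', B j j' * x (E i' j' k') = x (E i' j k') := by
      intro i' k'
      have := congrFun (hB' _ (h2 i' k')) j
      simpa [Matrix.mulVec, dotProduct] using this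
    have s3 : ∀ i' j', ∑ k', C k k' * x (E i' j' k') = x (E i' j' k) := by
      intro i' j'
      have := congrFun (hC' _ (h3 i' j')) k
      simpa [Matrix.mulVec, dotProduct] using this
    calc (P *ᵥ x) (E i j k)
        = ∑ c, P (E i j k) c * x c := by simp [Matrix.mulVec, dotProduct]
      _ = ∑ q : Fin p1 × Fin p2 × Fin p3,
            P (E i j k) (((Equiv.prodCongr (Equiv.refl (Fin p1)) finProdFinEquiv).trans
              finProdFinEquiv) q) *
            x (((Equiv.prodCongr (Equiv.refl (Fin p1)) finProdFinEquiv).trans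
              finProdFinEquiv) q) :=
        (Equiv.sum_comp _ _).symm
      _ = ∑ i', ∑ j', ∑ k', A i i' * (B j j' * (C k k' * x (E i' j' k'))) := by
        rw [Fintype.sum_prod_type]
        refine Finset.sum_congr rfl fun i' _ => ?_
        rw [Fintype.sum_prod_type]
        refine Finset.sum_congr rfl fun j' _ => Finset.sum_congr rfl fun k' _ => ?_
        rw [e3_apply]
        simp only [hP, kronF, E, Matrix.of_apply, Equiv.symm_apply_apply]
        ring
      _ = x (E i j k) := by
        simp_rw [← Finset.mul_sum, s3, s2, s1]
  exact hfix ▸ key x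

lemma skron3_mono {p1 p2 p3 : ℕ} {S1 T1 : Submodule ℝ (Fin p1 → ℝ)}
    {S2 T2 : Submodule ℝ (Fin p2 → ℝ)} {S3 T3 : Submodule ℝ (Fin p3 → ℝ)}
    (h1 : S1 ≤ T1) (h2 : S2 ≤ T2) (h3 : S3 ≤ T3) :
    skron3 S1 S2 S3 ≤ skron3 T1 T2 T3 :=
  Submodule.span_mono fun _ ⟨v1, hv1, v2, hv2, v3, hv3, hx⟩ =>
    ⟨v1, h1 hv1, v2, h2 hv2, v3, h3 hv3, hx⟩

end Kron3Aux

/-- Threefold Kronecker-product subspaces intersect factorwise: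
`(S₁ ⊗ S₂ ⊗ S₃) ⊓ (S̃₁ ⊗ S̃₂ ⊗ S̃₃) = (S₁ ⊓ S̃₁) ⊗ (S₂ ⊓ S̃₂) ⊗ (S₃ ⊓ S̃₃)`. -/
theorem kron3_subspace_inter (p1 p2 p3 : ℕ) (h1 : 0 < p1) (h2 : 0 < p2) (h3 : 0 < p3)
    (S1 S1' : Submodule ℝ (Fin p1 → ℝ)) (S2 S2' : Submodule ℝ (Fin p2 → ℝ))
    (S3 S3' : Submodule ℝ (Fin p3 → ℝ)) :
    (skron3 S1 S2 S3) ⊓ (skron3 S1' S2' S3') =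
      skron3 (S1 ⊓ S1') (S2 ⊓ S2') (S3 ⊓ S3') := by
  apply le_antisymm
  · rintro x ⟨hx, hx'⟩
    obtain ⟨f1, f2, f3⟩ := Kron3Aux.fibers hx
    obtain ⟨g1, g2, g3⟩ := Kron3Aux.fibers hx'
    exact Kron3Aux.fibers_mem _ _ _ x
      (fun j k => Submodule.mem_inf.mpr ⟨f1 j k, g1 j k⟩)
      (fun i k => Submodule.mem_inf.mpr ⟨f2 i k, g2 i k⟩)
      (fun i j => Submodule.mem_inf.mpr ⟨f3 i j, g3 i j⟩)
  · exact le_inf (Kron3Aux.skron3_mono inf_le_left inf_le_left inf_le_left)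
      (Kron3Aux.skron3_mono inf_le_right inf_le_right inf_le_right)
end

section
/- Let p₁, p₂, p₃ be positive integers and T any subspace of ℝ^{p₁ p₂ p₃}. Then there exist subspaces S_i ⊆ ℝ^{p_i} (i = 1, 2, 3) such that (1) T ⊆ S₁ ⊗ S₂ ⊗ S₃, and (2) for any subspaces S_i' ⊆ ℝ^{p_i} with T ⊆ S₁' ⊗ S₂' ⊗ S₃', one has S₁ ⊗ S₂ ⊗ S₃ ⊆ S₁' ⊗ S₂' ⊗ S₃'. That is, the family of threefold Kronecker-product subspaces containing T has a least element (the generalized Kronecker envelope of T). -/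
open Matrix MeasureTheory ProbabilityTheory

/-! A vector lies in `S₁ ⊗ S₂ ⊗ S₃` exactly when all its mode-`i` fibres lie in `Sᵢ`, so the
envelope of `T` is obtained by taking for `Sᵢ` the span of the mode-`i` fibres of all elements
of `T`. The characterisation reduces, through `S₁ ⊗ S₂ ⊗ S₃ = S₁ ⊗ (S₂ ⊗ S₃)`, to the twofold
one: if the columns of `x` lie in `V` and `P` is a projection onto `V`, then applying `P` to the
columns fixes `x` and turns `x = ∑ eᵢ ⊗ rowᵢ x` into `∑ P eᵢ ⊗ rowᵢ x ∈ V ⊗ W`. -/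

namespace Kron3Envelope

section TwoFold

variable {m n : ℕ}

def kronRow (i : Fin m) : (Fin (m * n) → ℝ) →ₗ[ℝ] (Fin n → ℝ) :=
  LinearMap.funLeft ℝ ℝ fun j => finProdFinEquiv (i, j)

def kronCol (j : Fin n) : (Fin (m * n) → ℝ) →ₗ[ℝ] (Fin m → ℝ) :=
  LinearMap.funLeft ℝ ℝ fun i => finProdFinEquiv (i, j)

@[simp] lemma kronRow_apply (i : Fin m) (x : Fin (m * n) → ℝ) (j : Fin n) :
    kronRow i x j = x (finProdFinEquiv (i, j)) := rfl

@[simp] lemma kronCol_apply (j : Fin n) (x : Fin (m * n) → ℝ) (i : Fin m) :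
    kronCol j x i = x (finProdFinEquiv (i, j)) := rfl

lemma kronRow_vkronF (v : Fin m → ℝ) (w : Fin n → ℝ) (i : Fin m) :
    kronRow i (vkronF v w) = v i • w := by
  ext j; simp [vkronF]

lemma kronCol_vkronF (v : Fin m → ℝ) (w : Fin n → ℝ) (j : Fin n) :
    kronCol j (vkronF v w) = w j • v := by
  ext i; simp [vkronF, mul_comm]

def vkronLeft (v : Fin m → ℝ) : (Fin n → ℝ) →ₗ[ℝ] (Fin (m * n) → ℝ) where
  toFun := vkronF v
  map_add' w w' := by ext x; simp [vkronF, mul_add]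
  map_smul' c w := by ext x; simp [vkronF, mul_left_comm]

def skron2 (V : Submodule ℝ (Fin m → ℝ)) (W : Submodule ℝ (Fin n → ℝ)) :
    Submodule ℝ (Fin (m * n) → ℝ) :=
  Submodule.span ℝ {x | ∃ v ∈ V, ∃ w ∈ W, x = vkronF v w}

variable {V V' : Submodule ℝ (Fin m → ℝ)} {W W' : Submodule ℝ (Fin n → ℝ)}

lemma skron2_mono (hV : V ≤ V') (hW : W ≤ W') : skron2 V W ≤ skron2 V' W' := by
  apply Submodule.span_mono
  rintro _ ⟨v, hv, w, hw, rfl⟩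
  exact ⟨v, hV hv, w, hW hw, rfl⟩

lemma kronCol_mem_of_mem_skron2 {x : Fin (m * n) → ℝ} (hx : x ∈ skron2 V W) (j : Fin n) :
    kronCol j x ∈ V := by
  suffices skron2 V W ≤ V.comap (kronCol j) from this hx
  refine Submodule.span_le.2 ?_
  rintro _ ⟨v, hv, w, -, rfl⟩
  simpa [kronCol_vkronF] using V.smul_mem (w j) hv

lemma kronRow_mem_of_mem_skron2 {x : Fin (m * n) → ℝ} (hx : x ∈ skron2 V W) (i : Fin m) :
    kronRow i x ∈ W := by
  suffices skron2 V W ≤ W.comap (kronRow i) from this hx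
  refine Submodule.span_le.2 ?_
  rintro _ ⟨v, -, w, hw, rfl⟩
  simpa [kronRow_vkronF] using W.smul_mem (v i) hw

lemma mem_skron2_of_forall {x : Fin (m * n) → ℝ} (hcol : ∀ j, kronCol j x ∈ V)
    (hrow : ∀ i, kronRow i x ∈ W) : x ∈ skron2 V W := by
  obtain ⟨g, hg⟩ := V.subtype.exists_leftInverse_of_injective V.ker_subtype
  set P := V.subtype ∘ₗ g
  have hP : ∀ v ∈ V, P v = v := fun v hv =>
    congrArg Subtype.val (LinearMap.congr_fun hg ⟨v, hv⟩)
  have hx : x = ∑ i, vkronF (P (Pi.single i 1)) (kronRow i x) := by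
    ext y
    obtain ⟨⟨i', j⟩, rfl⟩ := finProdFinEquiv.surjective y
    have hPcol := congrFun (congrArg P (pi_eq_sum_univ' (kronCol j x))) i'
    rw [hP _ (hcol j), map_sum] at hPcol
    simpa [vkronF, mul_comm] using hPcol
  rw [hx]
  exact Submodule.sum_mem _ fun i _ => Submodule.subset_span ⟨_, (g _).2, _, hrow i, rfl⟩

lemma mem_skron2_iff {x : Fin (m * n) → ℝ} :
    x ∈ skron2 V W ↔ (∀ j, kronCol j x ∈ V) ∧ ∀ i, kronRow i x ∈ W :=
  ⟨fun hx => ⟨kronCol_mem_of_mem_skron2 hx, kronRow_mem_of_mem_skron2 hx⟩,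
    fun h => mem_skron2_of_forall h.1 h.2⟩

end TwoFold

variable {p1 p2 p3 : ℕ}

lemma skron3_eq_skron2_skron2 (S1 : Submodule ℝ (Fin p1 → ℝ))
    (S2 : Submodule ℝ (Fin p2 → ℝ)) (S3 : Submodule ℝ (Fin p3 → ℝ)) :
    skron3 S1 S2 S3 = skron2 S1 (skron2 S2 S3) := by
  apply le_antisymm
  · refine Submodule.span_mono ?_
    rintro _ ⟨v1, h1, v2, h2, v3, h3, rfl⟩
    exact ⟨v1, h1, _, Submodule.subset_span ⟨v2, h2, v3, h3, rfl⟩, rfl⟩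
  · refine Submodule.span_le.2 ?_
    rintro _ ⟨v1, h1, w, hw, rfl⟩
    suffices skron2 S2 S3 ≤ (skron3 S1 S2 S3).comap (vkronLeft v1) from this hw
    refine Submodule.span_le.2 ?_
    rintro _ ⟨v2, h2, v3, h3, rfl⟩
    exact Submodule.subset_span ⟨v1, h1, v2, h2, v3, h3, rfl⟩

lemma skron3_mono {S1 S1' : Submodule ℝ (Fin p1 → ℝ)} {S2 S2' : Submodule ℝ (Fin p2 → ℝ)}
    {S3 S3' : Submodule ℝ (Fin p3 → ℝ)} (h1 : S1 ≤ S1') (h2 : S2 ≤ S2') (h3 : S3 ≤ S3') :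
    skron3 S1 S2 S3 ≤ skron3 S1' S2' S3' := by
  simpa only [skron3_eq_skron2_skron2] using skron2_mono h1 (skron2_mono h2 h3)

lemma mem_skron3_iff {S1 : Submodule ℝ (Fin p1 → ℝ)} {S2 : Submodule ℝ (Fin p2 → ℝ)}
    {S3 : Submodule ℝ (Fin p3 → ℝ)} {x : Fin (p1 * (p2 * p3)) → ℝ} :
    x ∈ skron3 S1 S2 S3 ↔ (∀ jk, kronCol jk x ∈ S1) ∧
      (∀ i k, kronCol k (kronRow i x) ∈ S2) ∧ ∀ i j, kronRow j (kronRow i x) ∈ S3 := by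
  simp only [skron3_eq_skron2_skron2, mem_skron2_iff, forall_and]

/- The mode-1, -2 and -3 fibres of `x` are `kronCol jk x`, `kronCol k (kronRow i x)` and
`kronRow j (kronRow i x)`. -/
def fiberSpan1 (T : Submodule ℝ (Fin (p1 * (p2 * p3)) → ℝ)) : Submodule ℝ (Fin p1 → ℝ) :=
  ⨆ jk, T.map (kronCol jk)

def fiberSpan2 (T : Submodule ℝ (Fin (p1 * (p2 * p3)) → ℝ)) : Submodule ℝ (Fin p2 → ℝ) :=
  ⨆ (i) (k), T.map (kronCol k ∘ₗ kronRow i)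

def fiberSpan3 (T : Submodule ℝ (Fin (p1 * (p2 * p3)) → ℝ)) : Submodule ℝ (Fin p3 → ℝ) :=
  ⨆ (i) (j), T.map (kronRow j ∘ₗ kronRow i)

lemma le_skron3_iff {S1 : Submodule ℝ (Fin p1 → ℝ)} {S2 : Submodule ℝ (Fin p2 → ℝ)}
    {S3 : Submodule ℝ (Fin p3 → ℝ)} {T : Submodule ℝ (Fin (p1 * (p2 * p3)) → ℝ)} :
    T ≤ skron3 S1 S2 S3 ↔ fiberSpan1 T ≤ S1 ∧ fiberSpan2 T ≤ S2 ∧ fiberSpan3 T ≤ S3 := by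
  simp only [fiberSpan1, fiberSpan2, fiberSpan3, iSup_le_iff, Submodule.map_le_iff_le_comap]
  simp only [SetLike.le_def, Submodule.mem_comap, LinearMap.comp_apply, mem_skron3_iff]
  grind

end Kron3Envelope

theorem kron3_envelope_exists_general (p1 p2 p3 : ℕ)
    (T : Submodule ℝ (Fin (p1 * (p2 * p3)) → ℝ)) :
    ∃ (S1 : Submodule ℝ (Fin p1 → ℝ)) (S2 : Submodule ℝ (Fin p2 → ℝ))
      (S3 : Submodule ℝ (Fin p3 → ℝ)),
      T ≤ skron3 S1 S2 S3 ∧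
        ∀ (S1' : Submodule ℝ (Fin p1 → ℝ)) (S2' : Submodule ℝ (Fin p2 → ℝ))
          (S3' : Submodule ℝ (Fin p3 → ℝ)),
          T ≤ skron3 S1' S2' S3' → skron3 S1 S2 S3 ≤ skron3 S1' S2' S3' := by
  refine ⟨Kron3Envelope.fiberSpan1 T, Kron3Envelope.fiberSpan2 T, Kron3Envelope.fiberSpan3 T,
    Kron3Envelope.le_skron3_iff.2 ⟨le_rfl, le_rfl, le_rfl⟩, fun S1' S2' S3' hT => ?_⟩
  obtain ⟨h1, h2, h3⟩ := Kron3Envelope.le_skron3_iff.1 hT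
  exact Kron3Envelope.skron3_mono h1 h2 h3

/-- Existence of the generalized (threefold) Kronecker envelope: the family of threefold
Kronecker-product subspaces containing a given subspace `T ⊆ ℝ^{p₁p₂p₃}` has a least
element. -/
theorem kron3_envelope_exists (p1 p2 p3 : ℕ) (h1 : 0 < p1) (h2 : 0 < p2) (h3 : 0 < p3)
    (T : Submodule ℝ (Fin (p1 * (p2 * p3)) → ℝ)) :
    ∃ (S1 : Submodule ℝ (Fin p1 → ℝ)) (S2 : Submodule ℝ (Fin p2 → ℝ))
      (S3 : Submodule ℝ (Fin p3 → ℝ)),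
      T ≤ skron3 S1 S2 S3 ∧
        ∀ (S1' : Submodule ℝ (Fin p1 → ℝ)) (S2' : Submodule ℝ (Fin p2 → ℝ))
          (S3' : Submodule ℝ (Fin p3 → ℝ)),
          T ≤ skron3 S1' S2' S3' → skron3 S1 S2 S3 ≤ skron3 S1' S2' S3' :=
  kron3_envelope_exists_general p1 p2 p3 T
end
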